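/- Suppose the scalar code C*_{a,r} has the following property: for every erasure set E ⊆ {0,…,a(r+1)−1} with |E| = a and all codewords x, y ∈ C*_{a,r} satisfying x_j = y_j for every j ∉ E, one has x_i = y_i for every i ∈ E ∩ {0,…,r−1}. Then the Construction-1 packet-level code C_{(a,a(r+1)−1,r)} is an (a, a(r+1)−1) streaming code. -/

import Mathlib

/-!
Fix a coordinate `i` of `m(t)` and put `s = t - i`. Read the difference `d = m - m'` of two
streams, and its parities, along the diagonal starting at time `s`: message symbol `i'` of
block `j` at time `s + j(r+1) + i'`, parity symbol `p` at time `s + p(r+1) + r`. This is a word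
of `C*_{a,r}`: row `I` of `H` is the parity equation at time `s + I(r+1) + r`, whose terms
reaching back before `s` vanish. The diagonal visits distinct times inside
`[s, t + a(r+1) - 1]`, so at most `a` of its positions are erased and all others are zero;
recovering position `i < r` in `C*_{a,r}` gives `d(t)_i = 0`.
-/

/-- A packet-level code with a causal systematic encoder: the parity part of the
coded packet at time `t` is a fixed function of the message packets at times `≤ t`. -/
structure PacketCode (F : Type) (k n : ℕ) where
  parity : (ℤ → Fin k → F) → ℤ → Fin (n - k) → F
  causal : ∀ (m m' : ℤ → Fin k → F) (t : ℤ),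
    (∀ t' ≤ t, m t' = m' t') → parity m t = parity m' t

/-- A valid message stream vanishes at negative times. -/
def IsMsgStream {F : Type} [Zero F] {k : ℕ} (m : ℤ → Fin k → F) : Prop :=
  ∀ t < 0, m t = 0

/-- `(a, τ)` streaming-code property. -/
def IsSC {F : Type} [Zero F] {k n : ℕ} (C : PacketCode F k n) (a τ : ℕ) : Prop :=
  ∀ m m' : ℤ → Fin k → F, IsMsgStream m → IsMsgStream m' →
    ∀ t : ℤ, 0 ≤ t →
      ∀ E : Finset ℤ, (∀ x ∈ E, t ≤ x ∧ x ≤ t + τ) → t ∈ E → E.card ≤ a →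
        (∀ t' < t, m t' = m' t') →
        (∀ t' : ℤ, t ≤ t' → t' ≤ t + τ → t' ∉ E →
          m t' = m' t' ∧ C.parity m t' = C.parity m' t') →
        m t = m' t

/-- `(a, τ, r)` locally recoverable streaming code. -/
def IsLRSC {F : Type} [Zero F] {k n : ℕ} (C : PacketCode F k n) (a τ r : ℕ) : Prop :=
  IsSC C a τ ∧ IsSC C 1 r
/-- Every square submatrix of `M` is nonsingular. -/
def AllSquareSubmatricesNonsingular {K : Type} [Field K] {r a : ℕ}
    (M : Matrix (Fin r) (Fin a) K) : Prop :=
  ∀ (z : ℕ) (ρ : Fin z → Fin r) (σ : Fin z → Fin a),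
    Function.Injective ρ → Function.Injective σ → (M.submatrix ρ σ).det ≠ 0

/-- `Γ = C ⬝ diag(α₀,…,α_{a-1})`, i.e. the `j`-th column of `C` scaled by `α j`. -/
def gammaMatrix {K : Type} [Field K] {r a : ℕ} (C : Matrix (Fin r) (Fin a) K)
    (α : Fin a → K) : Matrix (Fin r) (Fin a) K :=
  Matrix.of fun i j => C i j * α j
/-- Construction 1: the packet-level code with `k = r`, `n = r+1` and parity
`p₀(t) = Σ_{j=0}^{a-1} \hat m(t - r - j(r+1)) · Γ_j`, where
`\hat m(s) = (m_0(s), m_1(s+1), …, m_{r-1}(s+r-1))`. -/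
def construction1 {K : Type} [Field K] {r a : ℕ} (Γ : Matrix (Fin r) (Fin a) K) :
    PacketCode K r (r + 1) where
  parity := fun m t _ => ∑ j : Fin a, ∑ i : Fin r,
    Γ i j * m (t - (r : ℤ) - ((j : ℕ) : ℤ) * ((r : ℤ) + 1) + ((i : ℕ) : ℤ)) i
  causal := by
    intro m m' t h
    funext s
    refine Finset.sum_congr rfl fun j _ => Finset.sum_congr rfl fun i _ => ?_
    have h1 : (0 : ℤ) ≤ ((j : ℕ) : ℤ) * ((r : ℤ) + 1) := by positivity
    have h2 : ((i : ℕ) : ℤ) < (r : ℤ) := by exact_mod_cast i.isLt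
    rw [h (t - (r : ℤ) - ((j : ℕ) : ℤ) * ((r : ℤ) + 1) + ((i : ℕ) : ℤ)) (by linarith)]
/-- The parity-check matrix `H = [Pᵀ | -I_a]` of the scalar code `C*_{a,r}`:
columns `0,…,ar-1` come in `a` blocks of width `r`, the `(i,j)`-th `1×r` block of
`Pᵀ` being `Γ_{i-j}ᵀ` for `j ≤ i` and `0` otherwise; the last `a` columns form
`-I_a`. -/
def starH {K : Type} [Field K] {r a : ℕ} (Γ : Matrix (Fin r) (Fin a) K) :
    Matrix (Fin a) (Fin (a * (r + 1))) K :=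
  Matrix.of fun i c =>
    if hc : (c : ℕ) < a * r then
      if hji : (c : ℕ) / r ≤ (i : ℕ) then
        Γ ⟨(c : ℕ) % r, Nat.mod_lt _ (Nat.pos_of_ne_zero fun h => by
              subst h; simp at hc)⟩
          ⟨(i : ℕ) - (c : ℕ) / r, lt_of_le_of_lt (Nat.sub_le _ _) i.isLt⟩
      else 0
    else if (c : ℕ) - a * r = (i : ℕ) then -1 else 0

/-- The scalar code `C*_{a,r} = {x : H x = 0}`, an `[a(r+1), ar]` linear code. -/
def starCode {K : Type} [Field K] {r a : ℕ} (Γ : Matrix (Fin r) (Fin a) K) :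
    Set (Fin (a * (r + 1)) → K) :=
  {x | Matrix.mulVec (starH Γ) x = 0}


open Finset

theorem Fin.sum_Iic_comp_sub {M : Type*} [AddCommMonoid M] {a : ℕ} (I : Fin a) (f : Fin a → M) :
    ∑ j ∈ Iic I, f (I - j) = ∑ j ∈ Iic I, f j := by
  have hreflect : ∀ j ∈ Iic I, I - j ∈ Iic I ∧ I - (I - j) = j := fun j hj => by
    have hjI := mem_Iic.1 hj
    have hle : I - j ≤ I := by rw [Fin.le_def, Fin.sub_val_of_le hjI]; omega
    exact ⟨mem_Iic.2 hle, Fin.ext (by rw [Fin.sub_val_of_le hle, Fin.sub_val_of_le hjI]; omega)⟩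
  exact sum_nbij' (I - ·) (I - ·) (fun j hj => (hreflect j hj).1) (fun j hj => (hreflect j hj).1)
    (fun j hj => (hreflect j hj).2) (fun j hj => (hreflect j hj).2) (fun _ _ => rfl)

theorem Nat.eq_of_mul_succ_add_eq {n j j' l l' : ℕ} (hl : l ≤ n) (hl' : l' ≤ n)
    (h : j * (n + 1) + l = j' * (n + 1) + l') : j = j' ∧ l = l' := by
  have hmod := congrArg (· % (n + 1)) h
  have hdiv := congrArg (· / (n + 1)) h
  simp only [add_comm (_ * _), Nat.add_mul_mod_self_right, Nat.add_mul_div_right _ _ n.succ_pos,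
    Nat.mod_eq_of_lt (Nat.lt_succ_of_le hl), Nat.mod_eq_of_lt (Nat.lt_succ_of_le hl'),
    Nat.div_eq_of_lt (Nat.lt_succ_of_le hl), Nat.div_eq_of_lt (Nat.lt_succ_of_le hl'),
    zero_add] at hmod hdiv
  exact ⟨hdiv, hmod⟩

section Construction1

variable {K : Type} [Field K] {r a : ℕ}

def construction1Parity (Γ : Matrix (Fin r) (Fin a) K) (m : ℤ → Fin r → K) (T : ℤ) : K :=
  ∑ j : Fin a, ∑ i : Fin r, Γ i j * m (T - r - (j : ℕ) * ((r : ℤ) + 1) + (i : ℕ)) i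

theorem construction1_parity (Γ : Matrix (Fin r) (Fin a) K) (m : ℤ → Fin r → K) (T : ℤ)
    (u : Fin (r + 1 - r)) : (construction1 Γ).parity m T u = construction1Parity Γ m T :=
  rfl

theorem construction1Parity_sub (Γ : Matrix (Fin r) (Fin a) K) (m m' : ℤ → Fin r → K) (T : ℤ) :
    construction1Parity Γ (m - m') T = construction1Parity Γ m T - construction1Parity Γ m' T := by
  simp only [construction1Parity, Pi.sub_apply, mul_sub, sum_sub_distrib]

theorem construction1Parity_eq_zero (Γ : Matrix (Fin r) (Fin a) K) {d : ℤ → Fin r → K} {T : ℤ}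
    (hd : ∀ u < T, d u = 0) : construction1Parity Γ d T = 0 := by
  refine sum_eq_zero fun j _ => sum_eq_zero fun i _ => ?_
  have : ((i : ℕ) : ℤ) < r := by exact_mod_cast i.isLt
  rw [hd _ (by nlinarith), Pi.zero_apply, mul_zero]

/-- Column `j * r + i` of `starH` carries message symbol `i` of block `j`, column `a * r + p`
carries parity symbol `p`. -/
def starIndex (a r : ℕ) : (Fin a × Fin r) ⊕ Fin a ≃ Fin (a * (r + 1)) :=
  (Equiv.sumCongr finProdFinEquiv (Equiv.refl _)).trans
    (finSumFinEquiv.trans (finCongr (by ring)))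

theorem starIndex_inl_val (j : Fin a) (i : Fin r) :
    (starIndex a r (.inl (j, i)) : ℕ) = i + r * j :=
  rfl

theorem starIndex_inr_val (p : Fin a) : (starIndex a r (.inr p) : ℕ) = a * r + p :=
  rfl

theorem starH_starIndex_inl (Γ : Matrix (Fin r) (Fin a) K) (I j : Fin a) (i : Fin r) :
    starH Γ I (starIndex a r (.inl (j, i))) = if j ≤ I then Γ i (I - j) else 0 := by
  have hr : 0 < r := i.pos
  have hlt : (i : ℕ) + r * j < a * r := by nlinarith [i.isLt, j.isLt]
  have hdiv : ((i : ℕ) + r * j) / r = j := by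
    rw [Nat.add_mul_div_left _ _ hr, Nat.div_eq_of_lt i.isLt, zero_add]
  have hmod : ((i : ℕ) + r * j) % r = i := by
    rw [Nat.add_mul_mod_self_left, Nat.mod_eq_of_lt i.isLt]
  simp only [starH, Matrix.of_apply, starIndex_inl_val, dif_pos hlt, hdiv, hmod, Fin.eta,
    Fin.le_def]
  split_ifs with hjI
  · exact congrArg (Γ i) (Fin.ext (Fin.sub_val_of_le hjI).symm)
  · rfl

theorem starH_starIndex_inr (Γ : Matrix (Fin r) (Fin a) K) (I p : Fin a) :
    starH Γ I (starIndex a r (.inr p)) = if p = I then -1 else 0 := by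
  simp only [starH, Matrix.of_apply, starIndex_inr_val, Nat.add_sub_cancel_left, Fin.val_inj,
    dif_neg (Nat.not_lt.2 (Nat.le_add_right _ _))]

def slotTime : (Fin a × Fin r) ⊕ Fin a → ℕ
  | .inl (j, i) => j * (r + 1) + i
  | .inr p => p * (r + 1) + r

theorem slotTime_injective : Function.Injective (slotTime : (Fin a × Fin r) ⊕ Fin a → ℕ) := by
  rintro (⟨j, i⟩ | p) (⟨j', i'⟩ | p') h <;> simp only [slotTime] at h
  · obtain ⟨hj, hi⟩ := Nat.eq_of_mul_succ_add_eq i.isLt.le i'.isLt.le h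
    rw [Fin.ext hj, Fin.ext hi]
  · exact absurd (Nat.eq_of_mul_succ_add_eq i.isLt.le le_rfl h).2 i.isLt.ne
  · exact absurd (Nat.eq_of_mul_succ_add_eq le_rfl i'.isLt.le h).2 i'.isLt.ne'
  · rw [Fin.ext (Nat.eq_of_mul_succ_add_eq le_rfl le_rfl h).1]

theorem slotTime_lt (z : (Fin a × Fin r) ⊕ Fin a) : slotTime z < a * (r + 1) := by
  rcases z with ⟨j, i⟩ | p <;> simp only [slotTime]
  · nlinarith [j.isLt, i.isLt]
  · nlinarith [p.isLt]

theorem exists_window_erasures (s : ℤ) {E : Finset ℤ} (hE : E.card ≤ a) :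
    ∃ E' : Finset (Fin (a * (r + 1))), E'.card = a ∧
      ∀ z, s + slotTime z ∈ E → starIndex a r z ∈ E' := by
  set E₀ := (univ : Finset ((Fin a × Fin r) ⊕ Fin a)).filter fun z => s + slotTime z ∈ E
  have hE₀ : E₀.card ≤ a := by
    refine (card_le_card_of_injOn (fun z => s + slotTime z) (fun z hz => (mem_filter.1 hz).2)
      fun z _ z' _ h => slotTime_injective ?_).trans hE
    simpa using h
  obtain ⟨E', hE₀E', -, hcardE'⟩ := exists_subsuperset_card_eq (n := a)
    (subset_univ (E₀.map (starIndex a r).toEmbedding)) (by rwa [card_map])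
    (by rw [card_univ, Fintype.card_fin]; nlinarith)
  exact ⟨E', hcardE', fun z hz => hE₀E' (mem_map_equiv.2 (by simpa [E₀] using hz))⟩

def window (Γ : Matrix (Fin r) (Fin a) K) (d : ℤ → Fin r → K) (s : ℤ) :
    (Fin a × Fin r) ⊕ Fin a → K
  | .inl (j, i) => d (s + slotTime (.inl (j, i) : (Fin a × Fin r) ⊕ Fin a)) i
  | .inr p => construction1Parity Γ d (s + slotTime (.inr p : (Fin a × Fin r) ⊕ Fin a))

theorem window_eq_zero (Γ : Matrix (Fin r) (Fin a) K) {d : ℤ → Fin r → K} {s : ℤ}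
    {z : (Fin a × Fin r) ⊕ Fin a} (hd : d (s + slotTime z) = 0)
    (hp : construction1Parity Γ d (s + slotTime z) = 0) : window Γ d s z = 0 := by
  rcases z with ⟨j, i⟩ | p
  · simp only [window, hd, Pi.zero_apply]
  · exact hp

theorem construction1Parity_window_time (Γ : Matrix (Fin r) (Fin a) K) {d : ℤ → Fin r → K}
    {s : ℤ} (hd : ∀ u < s, d u = 0) (I : Fin a) :
    construction1Parity Γ d (s + slotTime (.inr I : (Fin a × Fin r) ⊕ Fin a)) =
      ∑ j ∈ Iic I, ∑ i : Fin r, Γ i (I - j) * window Γ d s (.inl (j, i)) := by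
  rw [construction1Parity, ← sum_subset (subset_univ (Iic I))]
  · conv_lhs => rw [← Fin.sum_Iic_comp_sub]
    refine sum_congr rfl fun j hj => sum_congr rfl fun i _ => ?_
    have hjI : j ≤ I := mem_Iic.1 hj
    simp only [window, slotTime, Fin.sub_val_of_le hjI, Nat.cast_sub hjI]
    push_cast
    ring_nf
  · intro j _ hj
    have hIj : I < j := not_le.1 (mt mem_Iic.2 hj)
    refine sum_eq_zero fun i _ => ?_
    have : ((i : ℕ) : ℤ) < r := by exact_mod_cast i.isLt
    have : ((I : ℕ) : ℤ) + 1 ≤ j := by exact_mod_cast hIj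
    rw [hd _ (by simp only [slotTime]; push_cast; nlinarith), Pi.zero_apply, mul_zero]

theorem window_mem_starCode (Γ : Matrix (Fin r) (Fin a) K) {d : ℤ → Fin r → K} {s : ℤ}
    (hd : ∀ u < s, d u = 0) : window Γ d s ∘ (starIndex a r).symm ∈ starCode Γ := by
  funext I
  rw [Pi.zero_apply, Matrix.mulVec, dotProduct, ← (starIndex a r).sum_comp, Fintype.sum_sum_type,
    Fintype.sum_prod_type]
  simp only [Function.comp_apply, Equiv.symm_apply_apply, starH_starIndex_inl,
    starH_starIndex_inr, ite_mul, zero_mul, neg_one_mul, sum_ite_eq', mem_univ, if_true]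
  rw [window, construction1Parity_window_time Γ hd I, add_neg_eq_zero, ← filter_ge_eq_Iic, sum_filter]
  refine sum_congr rfl fun j _ => ?_
  split_ifs <;> simp only [sum_const_zero]

theorem isSC_construction1_of_starCode_recovery (Γ : Matrix (Fin r) (Fin a) K)
    (hrec : ∀ E : Finset (Fin (a * (r + 1))), E.card = a →
      ∀ x y : Fin (a * (r + 1)) → K, x ∈ starCode Γ → y ∈ starCode Γ →
        (∀ j, j ∉ E → x j = y j) → ∀ i ∈ E, (i : ℕ) < r → x i = y i) :
    IsSC (construction1 Γ) a (a * (r + 1) - 1) := by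
  intro m m' _ _ t _ E _ htE hcardE hpast hagree
  funext i
  set d := m - m'
  have hd_past : ∀ u < t, d u = 0 := fun u hu => sub_eq_zero.2 (hpast u hu)
  have hd_unerased : ∀ u ≤ t + (a * (r + 1) - 1 : ℕ), u ∉ E →
      d u = 0 ∧ construction1Parity Γ d u = 0 := by
    intro u hu huE
    by_cases hut : u < t
    · exact ⟨hd_past u hut, construction1Parity_eq_zero Γ fun v hv => hd_past v (hv.trans hut)⟩
    · obtain ⟨hm, hp⟩ := hagree u (not_lt.1 hut) hu huE
      refine ⟨sub_eq_zero.2 hm, ?_⟩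
      have hp0 := congrFun hp ⟨0, by omega⟩
      rw [construction1_parity, construction1_parity] at hp0
      rw [construction1Parity_sub, hp0, sub_self]
  set s := t - i
  set x := window Γ d s ∘ (starIndex a r).symm
  obtain ⟨E', hcardE', hE'⟩ := exists_window_erasures s hcardE
  have hx_unerased : ∀ c ∉ E', x c = 0 := by
    intro c hc
    obtain ⟨z, rfl⟩ := (starIndex a r).surjective c
    have hzE : s + slotTime z ∉ E := fun hz => hc (hE' z hz)
    have hz_lt := slotTime_lt z
    obtain ⟨hd, hp⟩ := hd_unerased (s + slotTime z) (by omega) hzE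
    simpa [x] using window_eq_zero Γ hd hp
  have ha : 0 < a := (card_pos.2 ⟨t, htE⟩).trans_le hcardE
  let z₀ : (Fin a × Fin r) ⊕ Fin a := .inl (⟨0, ha⟩, i)
  have hz₀ : s + slotTime z₀ = t := by simp [z₀, slotTime, s]
  have hrecovered := hrec E' hcardE' x 0 (window_mem_starCode Γ fun u hu => hd_past u (by omega))
    (Matrix.mulVec_zero _) hx_unerased (starIndex a r z₀)
    (hE' z₀ (hz₀ ▸ htE)) (by simp [z₀, starIndex_inl_val])
  simpa [x, window, z₀, hz₀, d, sub_eq_zero] using hrecovered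

end Construction1

theorem starCode_recovery_implies_SC
    (K : Type) [Field K] (a r : ℕ)
    (C : Matrix (Fin r) (Fin a) K)
    (α : Fin a → K)
    (hprop : ∀ E : Finset (Fin (a * (r + 1))), E.card = a →
      ∀ x y : Fin (a * (r + 1)) → K,
        x ∈ starCode (gammaMatrix C α) → y ∈ starCode (gammaMatrix C α) →
        (∀ j, j ∉ E → x j = y j) →
        ∀ i ∈ E, (i : ℕ) < r → x i = y i) :
    IsSC (construction1 (gammaMatrix C α)) a (a * (r + 1) - 1) :=
  isSC_construction1_of_starCode_recovery _ hprop
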